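/- Assume 0 < θ < 1 and let C⋆ be a constant with C⋆ > (1/2)√(θ/(1−θ)). Let q ∈ ℝ^p be a unit vector with ‖Aᵀq‖_∞² ≥ C⋆ that satisfies grad f(q) = 0 and vᵀ Hess f(q) v ≥ 0 for all v ∈ ℝ^p. Then q = a_i or q = −a_i for some column a_i of A. -/

import Mathlib

open Matrix MeasureTheory ProbabilityTheory Real
open scoped BigOperators ENNReal

noncomputable section

/-- squared Euclidean norm -/
def l2sq {m : ℕ} (v : Fin m → ℝ) : ℝ := ∑ i, v i ^ 2

/-- fourth power of the ℓ₄ norm -/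
def l4p4 {m : ℕ} (v : Fin m → ℝ) : ℝ := ∑ i, v i ^ 4

/-- Euclidean norm -/
def l2norm {m : ℕ} (v : Fin m → ℝ) : ℝ := Real.sqrt (l2sq v)

/-- squared sup-norm -/
def linfSq {m : ℕ} (v : Fin m → ℝ) : ℝ := ⨆ i, (v i) ^ 2

/-- projection onto the orthogonal complement of q -/
def proj {p : ℕ} (q : Fin p → ℝ) : Matrix (Fin p) (Fin p) ℝ := 1 - Matrix.vecMulVec q q

def zeta {p r : ℕ} (A : Matrix (Fin p) (Fin r) ℝ) (q : Fin p → ℝ) : Fin r → ℝ := Aᵀ *ᵥ q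

/-- population objective -/
def fpop {p r : ℕ} (θ : ℝ) (A : Matrix (Fin p) (Fin r) ℝ) (q : Fin p → ℝ) : ℝ :=
  -(1/4) * ((1 - θ) * l4p4 (zeta A q) + θ * (l2sq (zeta A q)) ^ 2)

/-- Riemannian gradient of the population objective -/
def gradf {p r : ℕ} (θ : ℝ) (A : Matrix (Fin p) (Fin r) ℝ) (q : Fin p → ℝ) : Fin p → ℝ :=
  -((proj q) *ᵥ ((1 - θ) • (A *ᵥ fun j => (zeta A q j) ^ 3)
      + (θ * l2sq (zeta A q)) • (A *ᵥ zeta A q)))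

/-- Riemannian Hessian of the population objective -/
def hessf {p r : ℕ} (θ : ℝ) (A : Matrix (Fin p) (Fin r) ℝ) (q : Fin p → ℝ) :
    Matrix (Fin p) (Fin p) ℝ :=
  -((1 - θ) • (proj q *
      ((3 : ℝ) • (A * Matrix.diagonal (fun j => (zeta A q j) ^ 2) * Aᵀ)
        - l4p4 (zeta A q) • (1 : Matrix (Fin p) (Fin p) ℝ)) * proj q))
  - θ • (proj q *
      (l2sq (zeta A q) • (A * Aᵀ)
        + (2 : ℝ) • (A * Aᵀ * Matrix.vecMulVec q q * (A * Aᵀ))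
        - (l2sq (zeta A q)) ^ 2 • (1 : Matrix (Fin p) (Fin p) ℝ)) * proj q)

/-- quadratic form -/
def qform {p : ℕ} (M : Matrix (Fin p) (Fin p) ℝ) (v : Fin p → ℝ) : ℝ := v ⬝ᵥ (M *ᵥ v)

/-- α(q) -/
def alphaf {p r : ℕ} (θ : ℝ) (A : Matrix (Fin p) (Fin r) ℝ) (q : Fin p → ℝ) : ℝ :=
  l4p4 (zeta A q) + (θ / (1 - θ)) * ((l2sq (zeta A q)) ^ 2 - l2sq (zeta A q))

/-- columns of X -/
def colX {r n : ℕ} (X : Matrix (Fin r) (Fin n) ℝ) (k : Fin n) : Fin r → ℝ := fun i => X i k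

/-- finite-sample objective -/
def Ffun {p r n : ℕ} (θ σ : ℝ) (A : Matrix (Fin p) (Fin r) ℝ) (X : Matrix (Fin r) (Fin n) ℝ)
    (q : Fin p → ℝ) : ℝ :=
  -(1 / (12 * θ * σ ^ 4 * n)) * ∑ k : Fin n, (q ⬝ᵥ (A *ᵥ colX X k)) ^ 4

/-- Riemannian gradient of the finite-sample objective -/
def gradF {p r n : ℕ} (θ σ : ℝ) (A : Matrix (Fin p) (Fin r) ℝ) (X : Matrix (Fin r) (Fin n) ℝ)
    (q : Fin p → ℝ) : Fin p → ℝ :=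
  (-(1 / (3 * θ * σ ^ 4 * n))) •
    ((proj q) *ᵥ ∑ k : Fin n, ((q ⬝ᵥ (A *ᵥ colX X k)) ^ 3) • (A *ᵥ colX X k))

/-- Riemannian Hessian of the finite-sample objective -/
def hessF {p r n : ℕ} (θ σ : ℝ) (A : Matrix (Fin p) (Fin r) ℝ) (X : Matrix (Fin r) (Fin n) ℝ)
    (q : Fin p → ℝ) : Matrix (Fin p) (Fin p) ℝ :=
  (-(1 / (3 * θ * σ ^ 4 * n))) •
    ∑ k : Fin n, proj q *
      ((3 * (q ⬝ᵥ (A *ᵥ colX X k)) ^ 2) • Matrix.vecMulVec (A *ᵥ colX X k) (A *ᵥ colX X k)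
        - ((q ⬝ᵥ (A *ᵥ colX X k)) ^ 4) • (1 : Matrix (Fin p) (Fin p) ℝ)) * proj q

/-- spectral norm of a rectangular matrix -/
def opNorm {m n : ℕ} (M : Matrix (Fin m) (Fin n) ℝ) : ℝ :=
  ‖LinearMap.toContinuousLinearMap (Matrix.toEuclideanLin M)‖

/-- Bernoulli(θ) law on ℝ -/
def bernoulliReal (θ : ℝ) : Measure ℝ :=
  ENNReal.ofReal θ • Measure.dirac (1 : ℝ) + ENNReal.ofReal (1 - θ) • Measure.dirac (0 : ℝ)

/-- Bernoulli–Gaussian law BG(θ, σ²) on ℝ -/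
def bgLaw (θ σ2 : ℝ) : Measure ℝ :=
  ((bernoulliReal θ).prod (gaussianReal 0 σ2.toNNReal)).map fun p => p.1 * p.2

/-- law of a random vector in ℝ^r with i.i.d. BG(θ, σ²) entries -/
def bgVec (r : ℕ) (θ σ2 : ℝ) : Measure (Fin r → ℝ) :=
  Measure.pi fun _ : Fin r => bgLaw θ σ2

/-- law of a random r×n matrix with i.i.d. BG(θ, σ²) entries -/
def bgMatrix (r n : ℕ) (θ σ2 : ℝ) : Measure (Fin r → Fin n → ℝ) :=
  Measure.pi fun _ : Fin r => Measure.pi fun _ : Fin n => bgLaw θ σ2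


/-! At a critical point the Euclidean gradient `-[(1-θ) A ζ³ + θ ‖ζ‖₂² A ζ]` is parallel to `q`,
with factor `(1-θ) ‖ζ‖₄⁴ + θ ‖ζ‖₂⁴`, positive as soon as `ζ = Aᵀq ≠ 0` (which the bound on
`‖ζ‖_∞` guarantees). Hence `q = A ζ` lies in the range of `A`, `‖ζ‖₂ = 1`, and every nonzero
coordinate satisfies `ζᵢ² = ‖ζ‖₄⁴`. If two coordinates `ζᵢ, ζⱼ` were nonzero, the Hessian would
take the value `-4 (1-θ) ‖ζ‖₄⁸ < 0` in the tangent direction `A (ζⱼ eᵢ - ζᵢ eⱼ)`. So `ζ = ±eᵢ`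
and `q = ±aᵢ`. -/

lemma l2sq_eq_dotProduct {m : ℕ} (v : Fin m → ℝ) : l2sq v = v ⬝ᵥ v := by
  simp only [l2sq, dotProduct, sq]

lemma exists_ne_zero_of_linfSq_pos {m : ℕ} {v : Fin m → ℝ} (h : 0 < linfSq v) :
    ∃ i, v i ≠ 0 := by
  by_contra! hv
  simp [linfSq, hv] at h

lemma l4p4_pos {m : ℕ} {v : Fin m → ℝ} {i : Fin m} (hi : v i ≠ 0) : 0 < l4p4 v :=
  (by positivity : 0 < v i ^ 4).trans_le <|
    Finset.single_le_sum (f := fun j => v j ^ 4) (fun j _ => by positivity) (Finset.mem_univ i)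

lemma l2sq_single {m : ℕ} (i : Fin m) (c : ℝ) : l2sq (Pi.single i c) = c ^ 2 := by
  rw [l2sq_eq_dotProduct, single_dotProduct, Pi.single_eq_same, sq]

section Projection

variable {p : ℕ} {q v : Fin p → ℝ}

lemma proj_mulVec (q x : Fin p → ℝ) : proj q *ᵥ x = x - (q ⬝ᵥ x) • q := by
  rw [proj, sub_mulVec, one_mulVec, vecMulVec_mulVec, op_smul_eq_smul]

lemma eq_smul_of_proj_mulVec_eq_zero {x : Fin p → ℝ} (h : proj q *ᵥ x = 0) :
    x = (q ⬝ᵥ x) • q := by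
  rwa [proj_mulVec, sub_eq_zero] at h

lemma dotProduct_proj_mul_mul_proj_mulVec (hv : q ⬝ᵥ v = 0) (B : Matrix (Fin p) (Fin p) ℝ) :
    v ⬝ᵥ ((proj q * B * proj q) *ᵥ v) = v ⬝ᵥ (B *ᵥ v) := by
  rw [← mulVec_mulVec, proj_mulVec q v, hv, zero_smul, sub_zero, ← mulVec_mulVec, proj_mulVec,
    dotProduct_sub, dotProduct_smul, dotProduct_comm v q, hv, smul_zero, sub_zero]

end Projection

section Isometry

variable {p r : ℕ} {A : Matrix (Fin p) (Fin r) ℝ}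

lemma dotProduct_mulVec_eq_zeta_dotProduct (x : Fin p → ℝ) (w : Fin r → ℝ) :
    x ⬝ᵥ (A *ᵥ w) = zeta A x ⬝ᵥ w := by
  rw [dotProduct_mulVec, zeta, mulVec_transpose]

lemma zeta_mulVec (hA : Aᵀ * A = 1) (w : Fin r → ℝ) : zeta A (A *ᵥ w) = w := by
  rw [zeta, mulVec_mulVec, hA, one_mulVec]

lemma l2sq_mulVec (hA : Aᵀ * A = 1) (w : Fin r → ℝ) : l2sq (A *ᵥ w) = l2sq w := by
  rw [l2sq_eq_dotProduct, dotProduct_mulVec_eq_zeta_dotProduct, zeta_mulVec hA,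
    l2sq_eq_dotProduct]

end Isometry

section CriticalPoint

variable {p r : ℕ} {A : Matrix (Fin p) (Fin r) ℝ} {θ : ℝ} {q : Fin p → ℝ}

lemma zeta_smul (c : ℝ) (x : Fin p → ℝ) : zeta A (c • x) = c • zeta A x :=
  mulVec_smul _ _ _

lemma mulVec_eq_smul_of_gradf_eq_zero (hgrad : gradf θ A q = 0) :
    A *ᵥ ((1 - θ) • (fun j => zeta A q j ^ 3) + (θ * l2sq (zeta A q)) • zeta A q) =
      ((1 - θ) * l4p4 (zeta A q) + θ * l2sq (zeta A q) ^ 2) • q := by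
  have hG := eq_smul_of_proj_mulVec_eq_zero (neg_eq_zero.mp hgrad)
  rw [← mulVec_smul, ← mulVec_smul, ← mulVec_add] at hG
  have h4 : zeta A q ⬝ᵥ (fun j => zeta A q j ^ 3) = l4p4 (zeta A q) :=
    Finset.sum_congr rfl fun j _ => by ring
  rw [hG, dotProduct_mulVec_eq_zeta_dotProduct, dotProduct_add, dotProduct_smul, dotProduct_smul,
    h4, ← l2sq_eq_dotProduct, smul_eq_mul, smul_eq_mul]
  congr 1
  ring

lemma eq_mulVec_zeta_of_gradf_eq_zero (hA : Aᵀ * A = 1) (hθ0 : 0 ≤ θ) (hθ : θ < 1) {i : Fin r}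
    (hi : zeta A q i ≠ 0) (hgrad : gradf θ A q = 0) : q = A *ᵥ zeta A q := by
  have hlam : 0 < (1 - θ) * l4p4 (zeta A q) + θ * l2sq (zeta A q) ^ 2 := by
    have := l4p4_pos hi
    have : 0 < 1 - θ := by linarith
    positivity
  obtain ⟨w, hw⟩ : ∃ w, q = A *ᵥ w := ⟨((1 - θ) * l4p4 (zeta A q) + θ * l2sq (zeta A q) ^ 2)⁻¹ •
      ((1 - θ) • (fun j => zeta A q j ^ 3) + (θ * l2sq (zeta A q)) • zeta A q), by
    rw [mulVec_smul, mulVec_eq_smul_of_gradf_eq_zero hgrad, inv_smul_smul₀ hlam.ne']⟩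
  conv_rhs => rw [hw, zeta_mulVec hA]
  exact hw

lemma sq_eq_l4p4_of_gradf_eq_zero (hA : Aᵀ * A = 1) (hθ : θ < 1) (hS : l2sq (zeta A q) = 1)
    (hgrad : gradf θ A q = 0) {i : Fin r} (hi : zeta A q i ≠ 0) :
    zeta A q i ^ 2 = l4p4 (zeta A q) := by
  have h := congrFun (congrArg (zeta A) (mulVec_eq_smul_of_gradf_eq_zero hgrad)) i
  simp only [zeta_mulVec hA, zeta_smul, hS, Pi.add_apply, Pi.smul_apply, smul_eq_mul] at h
  have hθ' : (1 - θ) * zeta A q i ≠ 0 := mul_ne_zero (by linarith) hi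
  apply mul_left_cancel₀ hθ'
  linear_combination h

lemma qform_hessf_mulVec (hA : Aᵀ * A = 1) {u : Fin r → ℝ} (hu : zeta A q ⬝ᵥ u = 0) :
    qform (hessf θ A q) (A *ᵥ u) =
      -(1 - θ) * (3 * ∑ k, zeta A q k ^ 2 * u k ^ 2 - l4p4 (zeta A q) * l2sq u)
        - θ * (l2sq (zeta A q) - l2sq (zeta A q) ^ 2) * l2sq u := by
  have hqv : q ⬝ᵥ (A *ᵥ u) = 0 := by rwa [dotProduct_mulVec_eq_zeta_dotProduct]
  have hAtv : Aᵀ *ᵥ (A *ᵥ u) = u := zeta_mulVec hA u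
  have hAAt : (A * Aᵀ) *ᵥ (A *ᵥ u) = A *ᵥ u := by rw [← mulVec_mulVec, hAtv]
  have hvv : (A *ᵥ u) ⬝ᵥ (A *ᵥ u) = l2sq u := by rw [← l2sq_eq_dotProduct, l2sq_mulVec hA]
  have hdiag : (A *ᵥ u) ⬝ᵥ ((A * diagonal (fun k => zeta A q k ^ 2) * Aᵀ) *ᵥ (A *ᵥ u)) =
      ∑ k, zeta A q k ^ 2 * u k ^ 2 := by
    rw [← mulVec_mulVec, ← mulVec_mulVec, hAtv, dotProduct_mulVec_eq_zeta_dotProduct,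
      zeta_mulVec hA]
    simp only [dotProduct, mulVec_diagonal]
    exact Finset.sum_congr rfl fun k _ => by ring
  have hrank1 : (A *ᵥ u) ⬝ᵥ ((A * Aᵀ * vecMulVec q q * (A * Aᵀ)) *ᵥ (A *ᵥ u)) = 0 := by
    rw [← mulVec_mulVec, hAAt, ← mulVec_mulVec, vecMulVec_mulVec, hqv]
    simp
  simp only [qform, hessf, sub_mulVec, add_mulVec, neg_mulVec, smul_mulVec, dotProduct_sub,
    dotProduct_add, dotProduct_neg, dotProduct_smul, one_mulVec,
    dotProduct_proj_mul_mul_proj_mulVec hqv, hAAt, hvv, hdiag, hrank1, smul_eq_mul]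
  ring

lemma zeta_eq_zero_of_hessf_nonneg (hA : Aᵀ * A = 1) (hθ : θ < 1) (hS : l2sq (zeta A q) = 1)
    (hsq : ∀ i, zeta A q i ≠ 0 → zeta A q i ^ 2 = l4p4 (zeta A q))
    (hhess : ∀ v, 0 ≤ qform (hessf θ A q) v) {i j : Fin r} (hij : i ≠ j)
    (hi : zeta A q i ≠ 0) : zeta A q j = 0 := by
  by_contra hj
  set ζ := zeta A q
  set T := l4p4 ζ
  set u : Fin r → ℝ := Pi.single i (ζ j) - Pi.single j (ζ i)
  have hu : ∀ w, u ⬝ᵥ w = ζ j * w i - ζ i * w j := fun w => by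
    simp only [u, sub_dotProduct, single_dotProduct]
  have hui : u i = ζ j := by simp [u, Pi.single_eq_of_ne hij]
  have huj : u j = -ζ i := by simp [u, Pi.single_eq_of_ne' hij]
  have hζu : ζ ⬝ᵥ u = 0 := by rw [dotProduct_comm, hu]; ring
  have hsum : ∑ k, ζ k ^ 2 * u k ^ 2 = u ⬝ᵥ fun k => ζ k ^ 2 * u k :=
    Finset.sum_congr rfl fun k _ => by ring
  have hval : qform (hessf θ A q) (A *ᵥ u) = -(4 * (1 - θ) * T ^ 2) := by
    rw [qform_hessf_mulVec hA hζu, hS, hsum, l2sq_eq_dotProduct, hu, hu, hui, huj]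
    linear_combination (-(1 - θ) * (6 * ζ j ^ 2 - T)) * hsq i hi + (-5 * (1 - θ) * T) * hsq j hj
  have hT : 0 < T := l4p4_pos hi
  have h1θ : 0 < 1 - θ := by linarith
  have := hval ▸ hhess (A *ᵥ u)
  have : 0 < 4 * (1 - θ) * T ^ 2 := by positivity
  linarith

end CriticalPoint

theorem stmt3_general (p r : ℕ)
    (A : Matrix (Fin p) (Fin r) ℝ) (hA : Aᵀ * A = 1)
    (θ Cstar : ℝ) (hθ0 : 0 < θ) (hθ : θ < 1)
    (hC : (1/2) * Real.sqrt (θ / (1 - θ)) < Cstar)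
    (q : Fin p → ℝ) (hq : l2sq q = 1) (hinf : Cstar ≤ linfSq (zeta A q))
    (hgrad : gradf θ A q = 0)
    (hhess : ∀ v : Fin p → ℝ, 0 ≤ qform (hessf θ A q) v) :
    ∃ i : Fin r, q = (fun k => A k i) ∨ q = (fun k => -A k i) := by
  obtain ⟨i, hi⟩ := exists_ne_zero_of_linfSq_pos <|
    ((by positivity : (0 : ℝ) ≤ (1/2) * Real.sqrt (θ / (1 - θ))).trans_lt hC).trans_le hinf
  have hqA : q = A *ᵥ zeta A q := eq_mulVec_zeta_of_gradf_eq_zero hA hθ0.le hθ hi hgrad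
  have hS : l2sq (zeta A q) = 1 := by rw [← l2sq_mulVec hA, ← hqA, hq]
  have hζ : zeta A q = Pi.single i (zeta A q i) := by
    ext j
    rcases eq_or_ne j i with rfl | hj
    · rw [Pi.single_eq_same]
    · rw [Pi.single_eq_of_ne hj, zeta_eq_zero_of_hessf_nonneg hA hθ hS
        (fun _ => sq_eq_l4p4_of_gradf_eq_zero hA hθ hS hgrad) hhess hj.symm hi]
  have hsign : zeta A q i = 1 ∨ zeta A q i = -1 := by
    rw [← sq_eq_one_iff, ← l2sq_single, ← hζ, hS]
  refine ⟨i, ?_⟩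
  rw [hqA, hζ]
  rcases hsign with h | h
  · left; ext k; simp [h]
  · right; ext k; simp [h]

theorem stmt3 (p r : ℕ) (hr : 1 ≤ r) (hrp : r ≤ p)
    (A : Matrix (Fin p) (Fin r) ℝ) (hA : Aᵀ * A = 1)
    (θ Cstar : ℝ) (hθ0 : 0 < θ) (hθ : θ < 1)
    (hC : (1/2) * Real.sqrt (θ / (1 - θ)) < Cstar)
    (q : Fin p → ℝ) (hq : l2sq q = 1) (hinf : Cstar ≤ linfSq (zeta A q))
    (hgrad : gradf θ A q = 0)
    (hhess : ∀ v : Fin p → ℝ, 0 ≤ qform (hessf θ A q) v) :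
    ∃ i : Fin r, q = (fun k => A k i) ∨ q = (fun k => -A k i) :=
  stmt3_general p r A hA θ Cstar hθ0 hθ hC q hq hinf hgrad hhess

end
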